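/- arXiv:2502.03243 — 7 statements merged into one kernel-verified Lean document; each statement's English description precedes it below -/
import Mathlib

section
/- Suppose a₁/q₁ < a₂/q₂ with 0 < a₁ < q₁, 0 < a₂ < q₂, and a₂q₁ - a₁q₂ = 1. Define h(a/q) = q + a + ā where ā is the multiplicative inverse of a mod q in [1, q). Let q̄̄₁ be the multiplicative inverse of q₁ mod q₂ in [1, q₂). Then h(a₁/q₁) = (2 + ⌊q₂/q₁⌋)·q₁ - q₂ + (q₁·q̄̄₁ - 1)/q₂. -/
/-!
The Farey relation `a₂ q₁ - a₁ q₂ = 1` exhibits explicit inverses: `q₁ a₂ ≡ 1 (mod q₂)` and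
`a₁ (-q₂) ≡ 1 (mod q₁)`. By uniqueness of inverses, `q̄̄₁ = a₂` and `ā₁ ≡ -q₂ (mod q₁)`,
i.e. `ā₁ = q₁ - q₂ % q₁`. Hence `(q₁ q̄̄₁ - 1) / q₂ = a₁` and `⌊q₂/q₁⌋ q₁ = q₂ - q₁ + ā₁`,
which is the claimed identity.
-/

namespace Int

theorem ModEq.eq_of_nonneg_of_lt {n a b : ℤ} (h : a ≡ b [ZMOD n])
    (ha₀ : 0 ≤ a) (ha : a < n) (hb₀ : 0 ≤ b) (hb : b < n) : a = b := by
  rw [← emod_eq_of_lt ha₀ ha, ← emod_eq_of_lt hb₀ hb]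
  exact h

theorem ModEq.of_mul_left_modEq_one {n a x y : ℤ} (hx : a * x ≡ 1 [ZMOD n])
    (hy : a * y ≡ 1 [ZMOD n]) : x ≡ y [ZMOD n] :=
  calc x = x * 1 := (mul_one x).symm
    _ ≡ x * (a * y) [ZMOD n] := hy.symm.mul_left x
    _ = a * x * y := by ring
    _ ≡ 1 * y [ZMOD n] := hx.mul_right y
    _ = y := one_mul y

theorem emod_eq_sub_of_modEq_neg {m n x : ℤ} (h : x ≡ -m [ZMOD n]) (hx : 0 < x) (hxn : x < n) :
    m % n = n - x := by
  have hm : n - x ≡ m [ZMOD n] := by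
    simpa using (ModEq.refl n).sub h
  rw [← hm, emod_eq_of_lt (by omega) (by omega)]

end Int

theorem stmt_3_general (a₁ q₁ a₂ q₂ ab₁ qbb₁ : ℤ)
    (ha₂ : 0 < a₂) (ha₂q : a₂ < q₂)
    (huni : a₂ * q₁ - a₁ * q₂ = 1)
    (hi1 : 1 ≤ ab₁) (hi2 : ab₁ < q₁) (hinv : a₁ * ab₁ ≡ 1 [ZMOD q₁])
    (hc1 : 1 ≤ qbb₁) (hc2 : qbb₁ < q₂) (hcinv : q₁ * qbb₁ ≡ 1 [ZMOD q₂]) :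
    q₁ + a₁ + ab₁ = (2 + q₂ / q₁) * q₁ - q₂ + (q₁ * qbb₁ - 1) / q₂ := by
  have hq₁a₂ : q₁ * a₂ ≡ 1 [ZMOD q₂] := Int.modEq_iff_dvd.2 ⟨-a₁, by linear_combination -huni⟩
  have hqbb : qbb₁ = a₂ :=
    (hcinv.of_mul_left_modEq_one hq₁a₂).eq_of_nonneg_of_lt (by omega) hc2 ha₂.le ha₂q
  have ha₁q₂ : a₁ * -q₂ ≡ 1 [ZMOD q₁] := Int.modEq_iff_dvd.2 ⟨a₂, by linear_combination -huni⟩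
  have hmod : q₂ % q₁ = q₁ - ab₁ :=
    Int.emod_eq_sub_of_modEq_neg (hinv.of_mul_left_modEq_one ha₁q₂) (by omega) hi2
  have hdiv : (q₁ * qbb₁ - 1) / q₂ = a₁ := by
    rw [hqbb, show q₁ * a₂ - 1 = a₁ * q₂ by linear_combination huni]
    exact Int.mul_ediv_cancel _ (by omega)
  rw [hdiv]
  linear_combination hmod - Int.emod_add_mul_ediv q₂ q₁

theorem stmt_3 (a₁ q₁ a₂ q₂ ab₁ qbb₁ : ℤ)
    (ha₁ : 0 < a₁) (ha₁q : a₁ < q₁) (ha₂ : 0 < a₂) (ha₂q : a₂ < q₂)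
    (hlt : (a₁ : ℚ) / q₁ < (a₂ : ℚ) / q₂)
    (huni : a₂ * q₁ - a₁ * q₂ = 1)
    (hi1 : 1 ≤ ab₁) (hi2 : ab₁ < q₁) (hinv : a₁ * ab₁ ≡ 1 [ZMOD q₁])
    (hc1 : 1 ≤ qbb₁) (hc2 : qbb₁ < q₂) (hcinv : q₁ * qbb₁ ≡ 1 [ZMOD q₂]) :
    q₁ + a₁ + ab₁ = (2 + q₂ / q₁) * q₁ - q₂ + (q₁ * qbb₁ - 1) / q₂ :=
  stmt_3_general a₁ q₁ a₂ q₂ ab₁ qbb₁ ha₂ ha₂q huni hi1 hi2 hinv hc1 hc2 hcinv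
end

section
/- Suppose a₁/q₁ < a₂/q₂ with 0 < a₁ < q₁, 0 < a₂ < q₂, and a₂q₁ - a₁q₂ = 1. Define h(a/q) = q + a + ā where ā is the multiplicative inverse of a mod q in [1, q). Let q̄₂ be the multiplicative inverse of q₂ mod q₁ in [1, q₁). Then h(a₂/q₂) = q₁ + (2 - ⌊q₁/q₂⌋)·q₂ - (q₂·q̄₂ - 1)/q₁. -/
/-!
The relation `a₂ q₁ - a₁ q₂ = 1` exhibits the two inverses explicitly: `q₁` inverts `a₂`
modulo `q₂`, so `ā₂ = q₁ mod q₂`, and `q₁ - a₁` inverts `q₂` modulo `q₁`, so `q̄₂ = q₁ - a₁` and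
`q₂ q̄₂ - 1 = q₁ (q₂ - a₂)`. Substituting both, the identity becomes
`q₁ = q₁ mod q₂ + q₂ ⌊q₁ / q₂⌋`.
-/

theorem Int.ModEq.eq_of_nonneg_of_lt_s4 {n x y : ℤ} (h : x ≡ y [ZMOD n])
    (hx₀ : 0 ≤ x) (hxn : x < n) (hy₀ : 0 ≤ y) (hyn : y < n) : x = y :=
  calc x = x % n := (Int.emod_eq_of_lt hx₀ hxn).symm
    _ = y % n := h
    _ = y := Int.emod_eq_of_lt hy₀ hyn

theorem Int.modEq_of_mul_modEq_one {n a x y : ℤ} (hx : a * x ≡ 1 [ZMOD n])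
    (hy : a * y ≡ 1 [ZMOD n]) : x ≡ y [ZMOD n] :=
  calc x = x * 1 := (mul_one x).symm
    _ ≡ x * (a * y) [ZMOD n] := hy.symm.mul_left x
    _ = (a * x) * y := by ring
    _ ≡ 1 * y [ZMOD n] := hx.mul_right y
    _ = y := one_mul y

theorem stmt_4_general (a₁ q₁ a₂ q₂ ab₂ qb₂ : ℤ)
    (ha₁ : 0 < a₁) (ha₁q : a₁ < q₁)
    (huni : a₂ * q₁ - a₁ * q₂ = 1)
    (hi1 : 1 ≤ ab₂) (hi2 : ab₂ < q₂) (hinv : a₂ * ab₂ ≡ 1 [ZMOD q₂])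
    (hb1 : 1 ≤ qb₂) (hb2 : qb₂ < q₁) (hbinv : q₂ * qb₂ ≡ 1 [ZMOD q₁]) :
    q₂ + a₂ + ab₂ = q₁ + (2 - q₁ / q₂) * q₂ - (q₂ * qb₂ - 1) / q₁ := by
  have hq₁_inv : a₂ * q₁ ≡ 1 [ZMOD q₂] :=
    Int.modEq_iff_dvd.2 ⟨-a₁, by linear_combination -huni⟩
  have hqa_inv : q₂ * (q₁ - a₁) ≡ 1 [ZMOD q₁] :=
    Int.modEq_iff_dvd.2 ⟨a₂ - q₂, by linear_combination -huni⟩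
  have hab : ab₂ = q₁ % q₂ := by
    have h := Int.modEq_of_mul_modEq_one hinv hq₁_inv
    rwa [Int.ModEq, Int.emod_eq_of_lt (by omega) hi2] at h
  have hqb : qb₂ = q₁ - a₁ :=
    (Int.modEq_of_mul_modEq_one hbinv hqa_inv).eq_of_nonneg_of_lt_s4
      (by omega) hb2 (by omega) (by omega)
  have hdiv : (q₂ * qb₂ - 1) / q₁ = q₂ - a₂ := by
    rw [show q₂ * qb₂ - 1 = q₁ * (q₂ - a₂) by rw [hqb]; linear_combination huni,
      Int.mul_ediv_cancel_left _ (by omega)]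
  rw [hdiv, hab]
  linear_combination Int.emod_add_mul_ediv q₁ q₂

theorem stmt_4 (a₁ q₁ a₂ q₂ ab₂ qb₂ : ℤ)
    (ha₁ : 0 < a₁) (ha₁q : a₁ < q₁) (ha₂ : 0 < a₂) (ha₂q : a₂ < q₂)
    (hlt : (a₁ : ℚ) / q₁ < (a₂ : ℚ) / q₂)
    (huni : a₂ * q₁ - a₁ * q₂ = 1)
    (hi1 : 1 ≤ ab₂) (hi2 : ab₂ < q₂) (hinv : a₂ * ab₂ ≡ 1 [ZMOD q₂])
    (hb1 : 1 ≤ qb₂) (hb2 : qb₂ < q₁) (hbinv : q₂ * qb₂ ≡ 1 [ZMOD q₁]) :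
    q₂ + a₂ + ab₂ = q₁ + (2 - q₁ / q₂) * q₂ - (q₂ * qb₂ - 1) / q₁ :=
  stmt_4_general a₁ q₁ a₂ q₂ ab₂ qb₂ ha₁ ha₁q huni hi1 hi2 hinv hb1 hb2 hbinv
end

section
/- Let a₁/q₁ < a₂/q₂ be consecutive elements of the Farey sequence F_Q of order Q, with 0 < a₁ < q₁ and 0 < a₂ < q₂. If q₁ < q₂, then h(a₂/q₂) > Q, where h(a/q) = q + a + ā and ā is the multiplicative inverse of a mod q in [1, q). -/
/-!
Consecutive Farey fractions satisfy `a₂ q₁ - a₁ q₂ = 1`, so `a₂ q₁ ≡ 1 (mod q₂)`. Since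
`0 < q₁ < q₂`, this forces `q₁ = ā₂`, and then `h(a₂/q₂) = q₂ + a₂ + q₁ > q₁ + q₂ > Q`,
the last inequality because otherwise the mediant `(a₁ + a₂)/(q₁ + q₂)` would lie in `F_Q`
strictly between the two fractions. The determinant identity comes from the fraction `a/q`
with `a₂ q - a q₂ = 1` and `Q - q₂ < q ≤ Q`: it lies in `F_Q` below `a₂/q₂`, and it cannot lie
below `a₁/q₁` either, since then `q₁ ≥ q + q₂ > Q`; so it is `a₁/q₁`.
-/

/-- `a₁/q₁ < a₂/q₂` are consecutive elements of the Farey sequence of order `Q`. -/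
def FareyConsec (Q a₁ q₁ a₂ q₂ : ℤ) : Prop :=
  0 < q₁ ∧ q₁ ≤ Q ∧ 0 < q₂ ∧ q₂ ≤ Q ∧ 0 ≤ a₁ ∧ a₁ ≤ q₁ ∧ 0 ≤ a₂ ∧ a₂ ≤ q₂ ∧
  Int.gcd a₁ q₁ = 1 ∧ Int.gcd a₂ q₂ = 1 ∧ (a₁ : ℚ) / q₁ < (a₂ : ℚ) / q₂ ∧
  ∀ c d : ℤ, 0 < d → d ≤ Q → ¬((a₁ : ℚ) / q₁ < (c : ℚ) / d ∧ (c : ℚ) / d < (a₂ : ℚ) / q₂)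

-- `y = b (c y - x d) + d (x b - a y)`, and both brackets are positive integers.
theorem Int.add_le_of_between_of_det_eq_one {a b c d x y : ℤ} (hb : 0 < b) (hd : 0 < d)
    (hdet : c * b - a * d = 1) (hax : a * y < x * b) (hxc : x * d < c * y) :
    b + d ≤ y := by
  have hy : y = b * (c * y - x * d) + d * (x * b - a * y) := by linear_combination (-y) * hdet
  nlinarith

theorem Int.exists_det_eq_one_of_gcd_eq_one {a₂ q₂ : ℤ} (Q : ℤ) (hq₂ : 0 < q₂)
    (hg : Int.gcd a₂ q₂ = 1) :
    ∃ a q : ℤ, Q - q₂ < q ∧ q ≤ Q ∧ a₂ * q - a * q₂ = 1 := by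
  obtain ⟨u, v, huv⟩ := Int.isCoprime_iff_gcd_eq_one.2 hg
  refine ⟨a₂ * ((Q - u) / q₂) - v, u + q₂ * ((Q - u) / q₂), ?_, ?_, ?_⟩
  all_goals have := Int.emod_add_mul_ediv (Q - u) q₂
  · linarith [Int.emod_lt_of_pos (Q - u) hq₂]
  · linarith [Int.emod_nonneg (Q - u) hq₂.ne']
  · linear_combination huv

theorem Int.div_lt_div_iff_mul_lt_mul {a b c d : ℤ} (hb : 0 < b) (hd : 0 < d) :
    (a : ℚ) / b < c / d ↔ a * d < c * b := by
  rw [div_lt_div_iff₀ (by exact_mod_cast hb) (by exact_mod_cast hd)]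
  exact_mod_cast Iff.rfl

namespace FareyConsec

variable {Q a₁ q₁ a₂ q₂ : ℤ} (h : FareyConsec Q a₁ q₁ a₂ q₂)
include h

theorem mul_lt_mul : a₁ * q₂ < a₂ * q₁ := by
  have ⟨hq₁, _, hq₂, _, _, _, _, _, _, _, hlt, _⟩ := h
  exact (Int.div_lt_div_iff_mul_lt_mul hq₁ hq₂).1 hlt

theorem not_between {c d : ℤ} (hd : 0 < d) (hdQ : d ≤ Q) (h₁ : a₁ * d < c * q₁) :
    ¬c * q₂ < a₂ * d := by
  have ⟨hq₁, _, hq₂, _, _, _, _, _, _, _, _, hgap⟩ := h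
  exact fun h₂ => hgap c d hd hdQ
    ⟨(Int.div_lt_div_iff_mul_lt_mul hq₁ hd).2 h₁, (Int.div_lt_div_iff_mul_lt_mul hd hq₂).2 h₂⟩

theorem lt_add_den : Q < q₁ + q₂ := by
  have ⟨hq₁, _, hq₂, _⟩ := h
  have hcross := h.mul_lt_mul
  by_contra! hle
  exact h.not_between (c := a₁ + a₂) (by omega) hle (by nlinarith) (by nlinarith)

theorem det_eq_one : a₂ * q₁ - a₁ * q₂ = 1 := by
  have ⟨hq₁, hq₁Q, hq₂, hq₂Q, _, _, _, _, hg₁, hg₂, _, _⟩ := h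
  have hcross := h.mul_lt_mul
  obtain ⟨a, q, hQq, hqQ, hdet⟩ := Int.exists_det_eq_one_of_gcd_eq_one Q hq₂ hg₂
  have hq : 0 < q := by omega
  have hle : a * q₁ ≤ a₁ * q := by
    by_contra! hlt
    exact h.not_between hq hqQ hlt (by linarith)
  rcases hle.lt_or_eq with hlt | heq
  · have := Int.add_le_of_between_of_det_eq_one hq hq₂ hdet hlt hcross
    omega
  · set D := a₂ * q₁ - a₁ * q₂
    have hq₁D : q₁ = q * D := by linear_combination (-q₁) * hdet - q₂ * heq
    have ha₁D : a₁ = a * D := by linear_combination (-a₁) * hdet - a₂ * heq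
    have hD : D ∣ 1 := by
      rw [← Int.ofNat_one, ← hg₁]
      exact Int.dvd_coe_gcd ⟨a, by linarith⟩ ⟨q, by linarith⟩
    exact Int.eq_one_of_dvd_one (by omega) hD

end FareyConsec

theorem stmt_5_general (Q a₁ q₁ a₂ q₂ ab₂ : ℤ)
    (hcons : FareyConsec Q a₁ q₁ a₂ q₂)
    (hq : q₁ < q₂)
    (hi1 : 1 ≤ ab₂) (hi2 : ab₂ < q₂) (hinv : a₂ * ab₂ ≡ 1 [ZMOD q₂]) :
    Q < q₂ + a₂ + ab₂ := by
  have ⟨hq₁, _, hq₂, _, _, _, ha₂, _, _, hg₂, _, _⟩ := hcons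
  have hdet := hcons.det_eq_one
  have hmod : q₁ ≡ ab₂ [ZMOD q₂] := by
    have h₁ : 1 ≡ a₂ * q₁ [ZMOD q₂] := Int.modEq_iff_dvd.2 ⟨a₁, by linear_combination hdet⟩
    simpa [Int.gcd_comm, hg₂] using Int.ModEq.cancel_left_div_gcd hq₂ (h₁.symm.trans hinv.symm)
  have hab₂ : q₁ = ab₂ := by
    rwa [Int.ModEq, Int.emod_eq_of_lt hq₁.le hq, Int.emod_eq_of_lt (by omega) hi2] at hmod
  linarith [hcons.lt_add_den]

theorem stmt_5 (Q a₁ q₁ a₂ q₂ ab₂ : ℤ) (hQ : 1 ≤ Q)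
    (hcons : FareyConsec Q a₁ q₁ a₂ q₂)
    (ha₁ : 0 < a₁) (ha₁q : a₁ < q₁) (ha₂ : 0 < a₂) (ha₂q : a₂ < q₂)
    (hq : q₁ < q₂)
    (hi1 : 1 ≤ ab₂) (hi2 : ab₂ < q₂) (hinv : a₂ * ab₂ ≡ 1 [ZMOD q₂]) :
    Q < q₂ + a₂ + ab₂ :=
  stmt_5_general Q a₁ q₁ a₂ q₂ ab₂ hcons hq hi1 hi2 hinv
end

section
/- Let a₁/q₁ < a₂/q₂ be consecutive elements of the Farey sequence F_Q of order Q, with 0 < a₁ < q₁ and 0 < a₂ < q₂. If q₂ < q₁ and h(a₁/q₁) ≤ Q, then h(a₂/q₂) ≤ Q, where h(a/q) = q + a + ā and ā is the multiplicative inverse of a mod q in [1, q). -/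
/-- Consecutive Farey fractions are unimodular. -/
lemma farey_det (Q a₁ q₁ a₂ q₂ : ℤ) (hQ : 1 ≤ Q) (hcons : FareyConsec Q a₁ q₁ a₂ q₂) :
    a₂ * q₁ - a₁ * q₂ = 1 := by
  obtain ⟨hq₁, hq₁Q, hq₂, hq₂Q, ha₁0, ha₁q, ha₂0, ha₂q, hg₁, hg₂, hlt, hbetw⟩ := hcons
  have hq₁R : (0:ℚ) < (q₁:ℚ) := by exact_mod_cast hq₁
  have hq₂R : (0:ℚ) < (q₂:ℚ) := by exact_mod_cast hq₂
  have hD : 0 < a₂ * q₁ - a₁ * q₂ := by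
    rw [div_lt_div_iff₀ hq₁R hq₂R] at hlt
    have : a₁ * q₂ < a₂ * q₁ := by exact_mod_cast hlt
    omega
  -- choose c, d with c*q₁ - d*a₁ = 1 and Q - q₁ < d ≤ Q
  obtain ⟨c, d, hcd, hdgt, hdle⟩ :
      ∃ c d : ℤ, c * q₁ - d * a₁ = 1 ∧ Q - q₁ < d ∧ d ≤ Q := by
    obtain ⟨u, v, huv⟩ := Int.isCoprime_iff_gcd_eq_one.mpr hg₁
    refine ⟨v + a₁ * ((Q + u) / q₁), Q - (Q + u) % q₁, ?_, ?_, ?_⟩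
    · have hrd : Q + u = q₁ * ((Q + u) / q₁) + (Q + u) % q₁ :=
        (Int.mul_ediv_add_emod (Q + u) q₁).symm
      linear_combination huv - a₁ * hrd
    · have : (Q + u) % q₁ < q₁ := Int.emod_lt_of_pos _ hq₁
      omega
    · have : 0 ≤ (Q + u) % q₁ := Int.emod_nonneg _ (by omega)
      omega
  have hd0 : 0 < d := by omega
  have hdR : (0:ℚ) < (d:ℚ) := by exact_mod_cast hd0
  have h1 : (a₁:ℚ) / q₁ < (c:ℚ) / d := by
    rw [div_lt_div_iff₀ hq₁R hdR]
    have : a₁ * d < c * q₁ := by linarith [mul_comm a₁ d]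
    exact_mod_cast this
  have h2' : (a₂:ℚ) / q₂ ≤ (c:ℚ) / d :=
    not_lt.mp (fun h => hbetw c d hd0 hdle ⟨h1, h⟩)
  have he : 0 ≤ c * q₂ - d * a₂ := by
    rw [div_le_div_iff₀ hq₂R hdR] at h2'
    have : a₂ * d ≤ c * q₂ := by exact_mod_cast h2'
    linarith [mul_comm a₂ d]
  have key : q₂ = q₁ * (c * q₂ - d * a₂) + d * (a₂ * q₁ - a₁ * q₂) := by
    linear_combination -q₂ * hcd
  have hD1 : 1 ≤ a₂ * q₁ - a₁ * q₂ := hD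
  by_cases he0 : c * q₂ - d * a₂ = 0
  · -- then c/d = a₂/q₂, so q₂ ∣ d and the determinant is 1
    have hdvd : q₂ ∣ d * a₂ := ⟨c, by linarith [mul_comm q₂ c]⟩
    have hq₂d : q₂ ∣ d :=
      (Int.isCoprime_iff_gcd_eq_one.mpr hg₂).symm.dvd_of_dvd_mul_right hdvd
    have hq₂led : q₂ ≤ d := Int.le_of_dvd hd0 hq₂d
    rw [he0, mul_zero, zero_add] at key
    have hle : a₂ * q₁ - a₁ * q₂ ≤ 1 := by nlinarith [key, hq₂led, hd0, hq₂]
    omega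
  · have he1 : 1 ≤ c * q₂ - d * a₂ := by omega
    have h3 : q₁ ≤ q₁ * (c * q₂ - d * a₂) := le_mul_of_one_le_right hq₁.le he1
    have h4 : d ≤ d * (a₂ * q₁ - a₁ * q₂) := le_mul_of_one_le_right hd0.le hD1
    linarith [key, h3, h4]

theorem stmt_6 (Q a₁ q₁ a₂ q₂ ab₁ ab₂ : ℤ) (hQ : 1 ≤ Q)
    (hcons : FareyConsec Q a₁ q₁ a₂ q₂)
    (ha₁ : 0 < a₁) (ha₁q : a₁ < q₁) (ha₂ : 0 < a₂) (ha₂q : a₂ < q₂)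
    (hq : q₂ < q₁)
    (hi1 : 1 ≤ ab₁) (hi2 : ab₁ < q₁) (hinv1 : a₁ * ab₁ ≡ 1 [ZMOD q₁])
    (hj1 : 1 ≤ ab₂) (hj2 : ab₂ < q₂) (hinv2 : a₂ * ab₂ ≡ 1 [ZMOD q₂])
    (hh1 : q₁ + a₁ + ab₁ ≤ Q) :
    q₂ + a₂ + ab₂ ≤ Q := by
  have hD : a₂ * q₁ - a₁ * q₂ = 1 := farey_det Q a₁ q₁ a₂ q₂ hQ hcons
  obtain ⟨hq₁, hq₁Q, hq₂, hq₂Q, ha₁0, ha₁q', ha₂0, ha₂q', hg₁, hg₂, hlt, hbetw⟩ := hcons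
  -- ab₁ = q₁ - q₂
  obtain ⟨k₁, hk₁⟩ : q₁ ∣ 1 - a₁ * ab₁ := hinv1.dvd
  have hd1' : q₁ ∣ (ab₁ - (q₁ - q₂)) * a₁ :=
    ⟨-k₁ - a₁ + a₂, by linear_combination -hk₁ - hD⟩
  have hd1'' : q₁ ∣ ab₁ - (q₁ - q₂) :=
    (Int.isCoprime_iff_gcd_eq_one.mpr hg₁).symm.dvd_of_dvd_mul_right hd1'
  have hab₁ : ab₁ = q₁ - q₂ := by
    have := Int.eq_zero_of_abs_lt_dvd hd1'' (by rw [abs_lt]; omega)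
    omega
  -- ab₂ ≡ q₁ (mod q₂)
  obtain ⟨k₂, hk₂⟩ : q₂ ∣ 1 - a₂ * ab₂ := hinv2.dvd
  have hd2' : q₂ ∣ (ab₂ - q₁) * a₂ :=
    ⟨-k₂ - a₁, by linear_combination -hk₂ - hD⟩
  have hd2'' : q₂ ∣ ab₂ - q₁ :=
    (Int.isCoprime_iff_gcd_eq_one.mpr hg₂).symm.dvd_of_dvd_mul_right hd2'
  obtain ⟨m, hm⟩ := hd2''
  have hqm : q₂ * m < 0 := by omega
  have hm1 : m ≤ -1 := by nlinarith [hqm, hq₂]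
  rcases eq_or_lt_of_le hm1 with hm1' | hm2
  · -- ab₂ = q₁ - q₂ : need q₁ + a₂ ≤ Q, using (q₁+a₁)(q₁-q₂) ≥ 1
    have hab₂ : ab₂ = q₁ - q₂ := by subst hm1'; omega
    have : a₂ ≤ q₁ + a₁ - q₂ := by
      nlinarith [hD, mul_pos (show (0:ℤ) < q₁ + a₁ by omega)
        (show (0:ℤ) < q₁ - q₂ by omega), hq₁]
    omega
  · -- m ≤ -2 : ab₂ ≤ q₁ - 2q₂
    have : ab₂ ≤ q₁ - 2 * q₂ := by nlinarith [hm, hm2, hq₂]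
    omega
end

section
/- Let γ₁ = a₁/q₁ < γ₂ = a₂/q₂ with 0 ≤ a₁ < q₁, 0 ≤ a₂ ≤ q₂, and a₂q₁ − a₁q₂ = 1. Let γ = (a₁+a₂)/(q₁+q₂) be the mediant. Then h(γ) > max{h(γ₁), h(γ₂)}, where h(a/q) = q + a + ā with ā the multiplicative inverse of a mod q in [1, q) (and h(0/1) := 1, h(1/1) := 3). -/
/-- `IsH a q v` means `v = h(a/q)`, where `h(a/q) = q + a + ab` with `ab` the
multiplicative inverse of `a` mod `q` in `[1, q)`, `h(0/1) = 1` and `h(1/1) = 3`. -/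
def IsH (a q v : ℤ) : Prop :=
  (a = 0 ∧ q = 1 ∧ v = 1) ∨ (a = 1 ∧ q = 1 ∧ v = 3) ∨
  (0 < a ∧ a < q ∧ ∃ ab : ℤ, 1 ≤ ab ∧ ab < q ∧ a * ab ≡ 1 [ZMOD q] ∧ v = q + a + ab)

theorem stmt_9 (a₁ q₁ a₂ q₂ v₁ v₂ v : ℤ)
    (hq₁ : 0 < q₁) (hq₂ : 0 < q₂)
    (ha₁ : 0 ≤ a₁) (ha₁q : a₁ < q₁) (ha₂ : 0 ≤ a₂) (ha₂q : a₂ ≤ q₂)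
    (hlt : (a₁ : ℚ) / q₁ < (a₂ : ℚ) / q₂)
    (huni : a₂ * q₁ - a₁ * q₂ = 1)
    (h₁ : IsH a₁ q₁ v₁) (h₂ : IsH a₂ q₂ v₂)
    (h : IsH (a₁ + a₂) (q₁ + q₂) v) :
    max v₁ v₂ < v := by
  have ha₂pos : 0 < a₂ := by nlinarith
  -- the mediant case must be the generic one
  rcases h with ⟨h0, hq, hv⟩ | ⟨h0, hq, hv⟩ | ⟨hpos, hltq, ab, hab1, hab2, habmod, hv⟩
  · omega
  · omega
  -- the inverse of a₁+a₂ mod q₁+q₂ is q₁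
  have hd : (q₁ + q₂) ∣ 1 - (a₁ + a₂) * ab := (Int.modEq_iff_dvd.mp habmod)
  have hd2 : (q₁ + q₂) ∣ 1 - (a₁ + a₂) * q₁ := ⟨-a₁, by nlinarith⟩
  have hd3 : (q₁ + q₂) ∣ q₁ - ab := by
    have := dvd_sub (Dvd.dvd.mul_left hd q₁) (Dvd.dvd.mul_left hd2 ab)
    have e : q₁ * (1 - (a₁ + a₂) * ab) - ab * (1 - (a₁ + a₂) * q₁) = q₁ - ab := by ring
    rwa [e] at this
  have habq : ab = q₁ := by
    obtain ⟨k, hk⟩ := hd3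
    rcases lt_trichotomy k 0 with hk' | hk' | hk'
    · nlinarith
    · rw [hk', mul_zero] at hk; omega
    · nlinarith
  rw [habq] at hv
  rw [hv]
  apply max_lt
  · rcases h₁ with ⟨h0, hq, hv₁⟩ | ⟨h0, hq, hv₁⟩ | ⟨hpos1, hlt1, ab₁, hb1, hb2, hbmod, hv₁⟩
    · linarith
    · omega
    · linarith
  · rcases h₂ with ⟨h0, hq, hv₂⟩ | ⟨h0, hq, hv₂⟩ | ⟨hpos2, hlt2, ab₂, hb1, hb2, hbmod, hv₂⟩
    · omega
    · linarith
    · -- ab₂ ≡ q₁ mod q₂, hence ab₂ ≤ q₁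
      have hd : q₂ ∣ 1 - a₂ * ab₂ := Int.modEq_iff_dvd.mp hbmod
      have hd2 : q₂ ∣ 1 - a₂ * q₁ := ⟨-a₁, by nlinarith⟩
      have hd3 : q₂ ∣ q₁ - ab₂ := by
        have := dvd_sub (Dvd.dvd.mul_left hd q₁) (Dvd.dvd.mul_left hd2 ab₂)
        have e : q₁ * (1 - a₂ * ab₂) - ab₂ * (1 - a₂ * q₁) = q₁ - ab₂ := by ring
        rwa [e] at this
      have : ab₂ ≤ q₁ := by
        obtain ⟨k, hk⟩ := hd3
        rcases le_or_gt 0 k with hk' | hk'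
        · nlinarith
        · nlinarith
      linarith
end

section
/- If γ₁ = a₁/q₁ < γ₂ = a₂/q₂ are consecutive elements of 𝔖𝔉*_Q = {0} ∪ 𝔖𝔉_Q for some Q ≥ 3, then a₂q₁ − a₁q₂ = 1. In other words, 𝔖𝔉*_Q defines a unimodular partition of [0,1]. -/
/-- The set of SL(2,ℕ)-saturated Farey fractions of order Q. -/
def SF (Q : ℤ) : Set ℚ :=
  {x : ℚ | 0 < x ∧ x ≤ 1 ∧ ∃ v : ℤ, IsH x.num (x.den : ℤ) v ∧ v ≤ Q}

/-- The set 𝔖𝔉*_Q = {0} ∪ 𝔖𝔉_Q. -/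
def SFstar (Q : ℤ) : Set ℚ := {0} ∪ SF Q

/-!
Write `γ = a/q ∈ 𝔖𝔉_Q` with `0 < a < q` and `a ā = 1 + p q`. The Farey parents `p/ā` and
`(a - p)/(q - ā)` of `γ` are unimodular neighbours of `γ`, and their `h`-values are at most
`h(γ)`, so they lie in `𝔖𝔉*_Q` (for `γ = 1` the left neighbour is `0/1`).
If `x < z < y` with `x, y` unimodular, then `den z ≥ den x + den y`.
Now let `γ₁ < γ₂` be consecutive. The left neighbour `l` of `γ₂` satisfies `l ≤ γ₁`; if
`l < γ₁` then `den γ₁ > den γ₂`, so `γ₁ ≠ 0` and the right neighbour `r ≥ γ₂` of `γ₁`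
must equal `γ₂`, since `r > γ₂` would give `den γ₂ > den γ₁`.
-/

namespace Rat

theorem lt_of_num_mul_den_sub_eq_one {x y : ℚ} (h : y.num * x.den - x.num * y.den = 1) :
    x < y := by
  rw [Rat.lt_iff]
  omega

theorem den_add_den_le_of_lt_of_lt {x y z : ℚ} (h : y.num * x.den - x.num * y.den = 1)
    (hxz : x < z) (hzy : z < y) : x.den + y.den ≤ z.den := by
  rw [Rat.lt_iff] at hxz hzy
  have hz : (z.den : ℤ) = x.den * (y.num * z.den - z.num * y.den)
      + y.den * (z.num * x.den - x.num * z.den) := by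
    linear_combination (-(z.den : ℤ)) * h
  have hx := x.pos
  have hy := y.pos
  zify
  nlinarith

theorem num_den_div_of_isCoprime {p r : ℤ} (hr : 0 < r) (h : IsCoprime p r) :
    (p / r : ℚ).num = p ∧ ((p / r : ℚ).den : ℤ) = r := by
  have hc : p.natAbs.Coprime r.natAbs := Int.isCoprime_iff_gcd_eq_one.mp h
  exact ⟨num_div_eq_of_coprime hr hc, den_div_eq_of_coprime hr hc⟩

end Rat

theorem div_mem_SFstar {Q p r u : ℤ} (hQ : 3 ≤ Q) (hp : 0 ≤ p) (hpr : p ≤ r)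
    (hu : p * u ≡ 1 [ZMOD r]) (hh : r + p + u % r ≤ Q) : (p / r : ℚ) ∈ SFstar Q := by
  have hcop : IsCoprime p r := by
    obtain ⟨k, hk⟩ := Int.modEq_iff_dvd.mp hu.symm
    exact ⟨u, -k, by linear_combination hk⟩
  have hr : 0 < r := by
    refine (hp.trans hpr).lt_of_ne fun hr0 => ?_
    subst hr0
    obtain rfl : p = 0 := le_antisymm hpr hp
    simp [Int.ModEq] at hu
  obtain ⟨hnum, hden⟩ := Rat.num_den_div_of_isCoprime hr hcop
  rcases hp.lt_or_eq with hp | rfl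
  swap
  · left; simp
  right
  refine ⟨by positivity, (div_le_one (by exact_mod_cast hr)).mpr (by exact_mod_cast hpr), ?_⟩
  rw [hnum, hden]
  rcases hpr.lt_or_eq with hpr | rfl
  swap
  · have hp1 : p = 1 := by simpa [div_self (show (p : ℚ) ≠ 0 by positivity)] using hnum.symm
    subst hp1
    exact ⟨3, Or.inr (Or.inl ⟨rfl, rfl, rfl⟩), hQ⟩
  have hinv : p * (u % r) ≡ 1 [ZMOD r] := ((Int.mod_modEq u r).mul_left p).trans hu
  have hs : u % r ≠ 0 := by
    intro h0
    rw [h0, mul_zero] at hinv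
    have := Int.eq_one_of_dvd_one hr.le (Int.modEq_zero_iff_dvd.mp hinv.symm)
    omega
  have := Int.emod_nonneg u hr.ne'
  exact ⟨_, Or.inr (Or.inr ⟨hp, hpr, u % r, by omega, Int.emod_lt_of_pos u hr, hinv, rfl⟩), hh⟩

namespace SF

variable {Q : ℤ} {x : ℚ}

theorem exists_num_mul_sub_mul_den_eq_one (hx : x ∈ SF Q) (hx1 : x < 1) :
    ∃ ab p : ℤ, 0 ≤ p ∧ p < x.num ∧ 1 ≤ ab ∧ ab < x.den ∧
      x.num * ab - p * x.den = 1 ∧ x.den + x.num + ab ≤ Q := by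
  obtain ⟨hpos, -, v, hH, hv⟩ := hx
  have ha : 0 < x.num := Rat.num_pos.mpr hpos
  have haq : x.num < x.den := by exact_mod_cast Rat.num_lt_denom_iff.mpr hx1
  rcases hH with ⟨h0, -⟩ | ⟨h1, hq1, -⟩ | ⟨-, -, ab, hab1, habq, hmod, rfl⟩
  · omega
  · omega
  obtain ⟨p, hp⟩ := Int.modEq_iff_dvd.mp hmod.symm
  have hq : (0 : ℤ) < x.den := by exact_mod_cast x.pos
  refine ⟨ab, p, ?_, ?_, hab1, habq, by linear_combination hp, hv⟩
  · nlinarith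
  · nlinarith

theorem exists_left_neighbor (hx : x ∈ SF Q) :
    ∃ l ∈ SFstar Q, x.num * l.den - l.num * x.den = 1 := by
  rcases hx.2.1.lt_or_eq with hx1 | rfl
  swap
  · exact ⟨0, Or.inl rfl, rfl⟩
  obtain ⟨ab, p, hp0, hpa, hab1, habq, hbez, hh⟩ := exists_num_mul_sub_mul_den_eq_one hx hx1
  obtain ⟨hnum, hden⟩ := Rat.num_den_div_of_isCoprime (p := p) (by omega : (0 : ℤ) < ab)
    ⟨-x.den, x.num, by linear_combination hbez⟩
  have haq : x.num < x.den := by exact_mod_cast Rat.num_lt_denom_iff.mpr hx1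
  refine ⟨p / ab, div_mem_SFstar (u := -x.den) (by omega) hp0 (by nlinarith) ?_ ?_, ?_⟩
  · exact Int.modEq_iff_dvd.mpr ⟨x.num, by linear_combination -hbez⟩
  · have := Int.emod_lt_of_pos (-(x.den : ℤ)) (by omega : (0 : ℤ) < ab)
    omega
  · rw [hnum, hden, hbez]

theorem exists_right_neighbor (hx : x ∈ SF Q) (hx1 : x < 1) :
    ∃ r ∈ SFstar Q, r.num * x.den - x.num * r.den = 1 := by
  obtain ⟨ab, p, hp0, hpa, hab1, habq, hbez, hh⟩ := exists_num_mul_sub_mul_den_eq_one hx hx1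
  obtain ⟨hnum, hden⟩ := Rat.num_den_div_of_isCoprime (p := x.num - p)
    (by omega : (0 : ℤ) < x.den - ab) ⟨x.den, -x.num, by linear_combination hbez⟩
  have haq : x.num < x.den := by exact_mod_cast Rat.num_lt_denom_iff.mpr hx1
  have hmod : ab % (x.den - ab) ≤ ab := by
    have := Int.ediv_nonneg (by omega : 0 ≤ ab) (by omega : (0 : ℤ) ≤ x.den - ab)
    rw [Int.emod_def]
    nlinarith
  refine ⟨(x.num - p : ℤ) / (x.den - ab : ℤ),
    div_mem_SFstar (u := ab) (by omega) (by omega) (by nlinarith) ?_ (by omega), ?_⟩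
  · exact Int.modEq_iff_dvd.mpr ⟨-p, by linear_combination -hbez⟩
  · rw [hnum, hden]
    linear_combination hbez

end SF

theorem stmt_11_general (Q : ℤ) (γ₁ γ₂ : ℚ)
    (h₁ : γ₁ ∈ SFstar Q) (h₂ : γ₂ ∈ SFstar Q) (hlt : γ₁ < γ₂)
    (hcons : ∀ γ ∈ SFstar Q, ¬(γ₁ < γ ∧ γ < γ₂)) :
    γ₂.num * (γ₁.den : ℤ) - γ₁.num * (γ₂.den : ℤ) = 1 := by
  have hγ₁0 : 0 ≤ γ₁ := h₁.elim (fun h => h.ge) fun h => h.1.le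
  have hγ₂ : γ₂ ∈ SF Q := h₂.resolve_left (hγ₁0.trans_lt hlt).ne'
  obtain ⟨l, hl, hlγ₂⟩ := SF.exists_left_neighbor hγ₂
  have hlγ₁ : l ≤ γ₁ := not_lt.mp fun h => hcons l hl ⟨h, Rat.lt_of_num_mul_den_sub_eq_one hlγ₂⟩
  rcases hlγ₁.eq_or_lt with rfl | hlγ₁
  · exact hlγ₂
  have hden₁ := Rat.den_add_den_le_of_lt_of_lt hlγ₂ hlγ₁ hlt
  have hγ₁ : γ₁ ∈ SF Q := h₁.resolve_left fun h => by
    rw [h, Rat.den_zero] at hden₁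
    have := l.pos
    have := γ₂.pos
    omega
  obtain ⟨r, hr, hγ₁r⟩ := SF.exists_right_neighbor hγ₁ (hlt.trans_le hγ₂.2.1)
  have hγ₂r : γ₂ ≤ r := not_lt.mp fun h => hcons r hr ⟨Rat.lt_of_num_mul_den_sub_eq_one hγ₁r, h⟩
  rcases hγ₂r.eq_or_lt with rfl | hγ₂r
  · exact hγ₁r
  have hden₂ := Rat.den_add_den_le_of_lt_of_lt hγ₁r hlt hγ₂r
  have := l.pos
  omega

theorem stmt_11 (Q : ℤ) (hQ : 3 ≤ Q) (γ₁ γ₂ : ℚ)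
    (h₁ : γ₁ ∈ SFstar Q) (h₂ : γ₂ ∈ SFstar Q) (hlt : γ₁ < γ₂)
    (hcons : ∀ γ ∈ SFstar Q, ¬(γ₁ < γ ∧ γ < γ₂)) :
    γ₂.num * (γ₁.den : ℤ) - γ₁.num * (γ₂.den : ℤ) = 1 :=
  stmt_11_general Q γ₁ γ₂ h₁ h₂ hlt hcons
end

section
/- Let a₁/q₁ < a₂/q₂ < a₃/q₃ be three consecutive elements of the Farey sequence F_Q with q₁ < q₂, and suppose h(a₁/q₁) ≤ Q and h(a₃/q₃) ≤ Q. Then ⌊(Q + q₁)/q₂⌋ = 1; in particular q₃ = q₂ − q₁ and a₃ = a₂ − a₁. -/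
set_option maxHeartbeats 1000000

lemma rat_div_lt_div {a b c d : ℤ} (hb : 0 < b) (hd : 0 < d) :
    (a : ℚ) / b < (c : ℚ) / d ↔ a * d < c * b := by
  rw [div_lt_div_iff₀ (by exact_mod_cast hb) (by exact_mod_cast hd)]
  norm_cast

/-- Consecutive Farey fractions are unimodular. -/
lemma farey_unimodular {Q a₁ q₁ a₂ q₂ : ℤ} (h : FareyConsec Q a₁ q₁ a₂ q₂) :
    a₂ * q₁ - a₁ * q₂ = 1 := by
  obtain ⟨hq₁, hq₁Q, hq₂, hq₂Q, _, _, _, _, hg₁, hg₂, hlt, hbet⟩ := h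
  have hlt' : a₁ * q₂ < a₂ * q₁ := (rat_div_lt_div hq₁ hq₂).1 hlt
  have hco : IsCoprime a₁ q₁ := Int.isCoprime_iff_gcd_eq_one.2 hg₁
  obtain ⟨u, v, huv⟩ := hco
  obtain ⟨d, c, hcd, hdQ, hdgt, hdpos⟩ :
      ∃ d c : ℤ, c * q₁ - a₁ * d = 1 ∧ d ≤ Q ∧ Q - q₁ < d ∧ 0 < d := by
    refine ⟨-u + q₁ * ((Q + u) / q₁), v + a₁ * ((Q + u) / q₁),
      by linear_combination huv, ?_, ?_, ?_⟩ <;>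
    · have hde := Int.mul_ediv_add_emod (Q + u) q₁
      have hr0 := Int.emod_nonneg (Q + u) hq₁.ne'
      have hr1 := Int.emod_lt_of_pos (Q + u) hq₁
      linarith
  -- c/d is to the right of a₁/q₁, hence (weakly) right of a₂/q₂
  have h2 : a₂ * d ≤ c * q₂ := by
    by_contra h'
    push_neg at h'
    have hA : (a₁ : ℚ) / q₁ < (c : ℚ) / d := (rat_div_lt_div hq₁ hdpos).2 (by linarith)
    have hB : (c : ℚ) / d < (a₂ : ℚ) / q₂ := (rat_div_lt_div hdpos hq₂).2 h'
    exact hbet c d hdpos hdQ ⟨hA, hB⟩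
  have h2' : 0 ≤ c * q₂ - a₂ * d := by linarith
  rcases h2'.lt_or_eq with he | he
  · -- c/d strictly right of a₂/q₂ : contradiction with q₂ ≤ Q
    exfalso
    have hid : q₂ = q₁ * (c * q₂ - a₂ * d) + d * (a₂ * q₁ - a₁ * q₂) := by
      linear_combination (-q₂) * hcd
    have h3 : q₁ * 1 ≤ q₁ * (c * q₂ - a₂ * d) :=
      mul_le_mul_of_nonneg_left (by linarith) hq₁.le
    have h4 : d * 1 ≤ d * (a₂ * q₁ - a₁ * q₂) :=
      mul_le_mul_of_nonneg_left (by linarith) hdpos.le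
    linarith
  · -- c/d = a₂/q₂ : then q₂ ∣ d and the determinant divides 1
    have hco2 : IsCoprime q₂ a₂ := (Int.isCoprime_iff_gcd_eq_one.2 hg₂).symm
    have hdvd : q₂ ∣ d := by
      apply hco2.dvd_of_dvd_mul_right
      exact ⟨c, by linarith⟩
    obtain ⟨m, hm⟩ := hdvd
    have hm1 : 1 ≤ m := by
      by_contra hm'
      push_neg at hm'
      have : q₂ * m ≤ 0 := mul_nonpos_of_nonneg_of_nonpos hq₂.le (by linarith)
      linarith [hm ▸ hdpos]
    have hcm : c = a₂ * m := by
      have hc2 : c * q₂ = a₂ * m * q₂ := by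
        have : c * q₂ = a₂ * d := by linarith
        rw [this, hm]; ring
      exact mul_right_cancel₀ hq₂.ne' hc2
    have hprod : m * (a₂ * q₁ - a₁ * q₂) = 1 := by
      rw [hcm, hm] at hcd
      linear_combination hcd
    by_contra hne
    have hge2 : 2 ≤ a₂ * q₁ - a₁ * q₂ := by
      rcases lt_or_ge (a₂ * q₁ - a₁ * q₂) 2 with h' | h'
      · exfalso; apply hne; linarith
      · exact h'
    have : m * 2 ≤ m * (a₂ * q₁ - a₁ * q₂) :=
      mul_le_mul_of_nonneg_left hge2 (by linarith)
    linarith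

/-- Denominators of consecutive Farey fractions sum to more than `Q` (mediant). -/
lemma farey_mediant {Q a₁ q₁ a₂ q₂ : ℤ} (h : FareyConsec Q a₁ q₁ a₂ q₂) :
    Q < q₁ + q₂ := by
  obtain ⟨hq₁, hq₁Q, hq₂, hq₂Q, _, _, _, _, hg₁, hg₂, hlt, hbet⟩ := h
  have hlt' : a₁ * q₂ < a₂ * q₁ := (rat_div_lt_div hq₁ hq₂).1 hlt
  by_contra h'
  push_neg at h'
  have hdpos : (0 : ℤ) < q₁ + q₂ := by linarith
  have hA : (a₁ : ℚ) / q₁ < ((a₁ + a₂ : ℤ) : ℚ) / ((q₁ + q₂ : ℤ) : ℚ) :=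
    (rat_div_lt_div hq₁ hdpos).2 (by nlinarith)
  have hB : ((a₁ + a₂ : ℤ) : ℚ) / ((q₁ + q₂ : ℤ) : ℚ) < (a₂ : ℚ) / q₂ :=
    (rat_div_lt_div hdpos hq₂).2 (by nlinarith)
  exact hbet (a₁ + a₂) (q₁ + q₂) hdpos h' ⟨hA, hB⟩

theorem stmt_12 (Q a₁ q₁ a₂ q₂ a₃ q₃ ab₁ ab₃ : ℤ) (hQ : 3 ≤ Q)
    (hcons12 : FareyConsec Q a₁ q₁ a₂ q₂)
    (hcons23 : FareyConsec Q a₂ q₂ a₃ q₃)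
    (ha₁ : 0 < a₁) (ha₁q : a₁ < q₁) (ha₂ : 0 < a₂) (ha₂q : a₂ < q₂)
    (ha₃ : 0 < a₃) (ha₃q : a₃ < q₃)
    (hq : q₁ < q₂)
    (hi1 : 1 ≤ ab₁) (hi2 : ab₁ < q₁) (hinv1 : a₁ * ab₁ ≡ 1 [ZMOD q₁])
    (hj1 : 1 ≤ ab₃) (hj2 : ab₃ < q₃) (hinv3 : a₃ * ab₃ ≡ 1 [ZMOD q₃])
    (hh1 : q₁ + a₁ + ab₁ ≤ Q) (hh3 : q₃ + a₃ + ab₃ ≤ Q) :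
    (Q + q₁) / q₂ = 1 ∧ q₃ = q₂ - q₁ ∧ a₃ = a₂ - a₁ := by
  have key1 : a₂ * q₁ - a₁ * q₂ = 1 := farey_unimodular hcons12
  have key2 : a₃ * q₂ - a₂ * q₃ = 1 := farey_unimodular hcons23
  have med23 : Q < q₂ + q₃ := farey_mediant hcons23
  obtain ⟨hq₁, hq₁Q, hq₂, hq₂Q, -, -, -, -, hg₁, hg₂, -, -⟩ := hcons12
  obtain ⟨-, -, hq₃, hq₃Q, -, -, -, -, -, hg₃, -, -⟩ := hcons23
  have hco2 : IsCoprime q₂ a₂ := (Int.isCoprime_iff_gcd_eq_one.2 hg₂).symm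
  have hkey : a₂ * (q₁ + q₃) = (a₁ + a₃) * q₂ := by linear_combination key1 - key2
  have hdvd : q₂ ∣ q₁ + q₃ := by
    apply hco2.dvd_of_dvd_mul_right
    exact ⟨a₁ + a₃, by linear_combination hkey⟩
  obtain ⟨ν, hν⟩ := hdvd
  have hν1 : 1 ≤ ν := by
    by_contra h'
    push_neg at h'
    have : q₂ * ν ≤ 0 := mul_nonpos_of_nonneg_of_nonpos hq₂.le (by linarith)
    linarith
  -- show ν = 1
  have hν2 : ν = 1 := by
    by_contra h'
    have hν2' : 2 ≤ ν := by
      rcases lt_or_ge ν 2 with h'' | h''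
      · exfalso; apply h'; linarith
      · exact h''
    have hq₃big : q₂ < q₃ := by
      have : q₂ * 2 ≤ q₂ * ν := mul_le_mul_of_nonneg_left hν2' hq₂.le
      linarith
    -- then ab₃ = q₂, contradicting h(a₃/q₃) ≤ Q
    have hd1 : q₃ ∣ 1 - a₃ * ab₃ := hinv3.dvd
    have hd2 : q₃ ∣ a₃ * (ab₃ - q₂) := by
      obtain ⟨k, hk⟩ := hd1
      exact ⟨-k - a₂, by linear_combination -hk - key2⟩
    have hco3 : IsCoprime q₃ a₃ := (Int.isCoprime_iff_gcd_eq_one.2 hg₃).symm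
    have hd3 : q₃ ∣ ab₃ - q₂ := hco3.dvd_of_dvd_mul_left hd2
    obtain ⟨k, hk⟩ := hd3
    have hk0 : k = 0 := by
      rcases lt_trichotomy k 0 with hk' | hk' | hk'
      · have : q₃ * k ≤ q₃ * (-1) := mul_le_mul_of_nonneg_left (by linarith) hq₃.le
        linarith
      · exact hk'
      · have : q₃ * 1 ≤ q₃ * k := mul_le_mul_of_nonneg_left (by linarith) hq₃.le
        linarith
    rw [hk0, mul_zero] at hk
    have : ab₃ = q₂ := by linarith
    linarith
  rw [hν2, mul_one] at hν
  have hq3 : q₃ = q₂ - q₁ := by linarith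
  have ha3 : a₃ = a₂ - a₁ := by
    have hc2 : (a₁ + a₃) * q₂ = a₂ * q₂ := by linear_combination -hkey + a₂ * hν
    have := mul_right_cancel₀ hq₂.ne' hc2
    linarith
  refine ⟨?_, hq3, ha3⟩
  have h1 : 1 ≤ (Q + q₁) / q₂ := (Int.le_ediv_iff_mul_le hq₂).2 (by linarith)
  have h2 : (Q + q₁) / q₂ < 2 := (Int.ediv_lt_iff_lt_mul hq₂).2 (by linarith)
  omega
end
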